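/- Let ρ be holomorphic near 0 in ℂ² with ρ₀₀ = ρ₁₀ = ρ₀₁ = ρ₂₀ = ρ₁₁ = 0 and ρ₀₂ ≠ 0, and let τ be holomorphic near 0 with τ(0,0) ≠ 0. If 𝒜₃^ρ = ρ₃₀ = 0, then 𝒜₄^{τρ} = τ(0,0)·𝒜₄^ρ, where 𝒜₄^g := g₄₀ − 3g₂₁²/g₀₂ for any such g. In particular 𝒜₄^{τρ} = 0 iff 𝒜₄^ρ = 0. -/

import Mathlib

/-!
By the Leibniz rule, each of `(τρ)₄₀`, `(τρ)₂₁`, `(τρ)₀₂` is a sum of products `τ_{ab} ρ_{cd}`;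
the vanishing of `ρ₀₀, ρ₁₀, ρ₀₁, ρ₂₀, ρ₁₁, ρ₃₀` kills every term except `τ₀₀ ρ₄₀`, `τ₀₀ ρ₂₁`,
`τ₀₀ ρ₀₂` respectively. Since `𝒜₄` is homogeneous of degree one under a common rescaling of
these three derivatives, `𝒜₄^{τρ} = τ₀₀ 𝒜₄^ρ`.
-/

/-- `pd i j f` is the partial derivative `∂^{i+j} f / ∂x^i ∂y^j` at the origin of `ℂ²`. -/
noncomputable def pd (i j : ℕ) (f : ℂ × ℂ → ℂ) : ℂ :=
  iteratedDeriv i (fun x => iteratedDeriv j (fun y => f (x, y)) 0) 0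

/-- The quantity `𝒜₄` of a function of two complex variables. -/
noncomputable def A4 (g : ℂ × ℂ → ℂ) : ℂ :=
  pd 4 0 g - 3 * (pd 2 1 g) ^ 2 / pd 0 2 g

open Filter Topology Finset

section PartialDeriv

variable {𝕜 E F : Type*} [NontriviallyNormedField 𝕜]
  [NormedAddCommGroup E] [NormedSpace 𝕜 E] [NormedAddCommGroup F] [NormedSpace 𝕜 F]

theorem AnalyticAt.eventually_analyticAt_along_fst [CompleteSpace F]
    {f : E × 𝕜 → F} {p : E × 𝕜} (hf : AnalyticAt 𝕜 f p) : ∀ᶠ x in 𝓝 p.1, AnalyticAt 𝕜 f (x, p.2) :=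
  (continuous_id.prodMk continuous_const).continuousAt.eventually hf.eventually_analyticAt

theorem AnalyticAt.deriv_along_snd_eq_fderiv {f : E × 𝕜 → F} {p : E × 𝕜}
    (hf : AnalyticAt 𝕜 f p) : deriv (fun y => f (p.1, y)) p.2 = fderiv 𝕜 f p (0, 1) := by
  have hslice : HasDerivAt (fun y : 𝕜 => (p.1, y)) (0, 1) p.2 :=
    (hasDerivAt_const p.2 p.1).prodMk (hasDerivAt_id p.2)
  exact (hf.differentiableAt.hasFDerivAt.comp_hasDerivAt p.2 hslice).deriv

theorem AnalyticAt.deriv_along_snd [CompleteSpace F] {f : E × 𝕜 → F} {p : E × 𝕜}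
    (hf : AnalyticAt 𝕜 f p) : AnalyticAt 𝕜 (fun x => deriv (fun y => f (x, y)) p.2) p.1 := by
  have hfderiv : AnalyticAt 𝕜 (fun x => fderiv 𝕜 f (x, p.2) (0, 1)) p.1 :=
    ((ContinuousLinearMap.apply 𝕜 F ((0 : E), (1 : 𝕜))).analyticAt _).comp
      hf.fderiv.curry_left
  refine hfderiv.congr ?_
  filter_upwards [hf.eventually_analyticAt_along_fst] with x hx
  exact hx.deriv_along_snd_eq_fderiv.symm

end PartialDeriv

section Leibniz

variable {f g : ℂ × ℂ → ℂ}

theorem pd_zero_zero (f : ℂ × ℂ → ℂ) : pd 0 0 f = f 0 := rfl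

theorem pd_i_zero_fun_mul (i : ℕ) (hf : AnalyticAt ℂ f 0) (hg : AnalyticAt ℂ g 0) :
    pd i 0 (fun p => f p * g p) =
      ∑ k ∈ range (i + 1), i.choose k * pd k 0 f * pd (i - k) 0 g := by
  simp only [pd, iteratedDeriv_zero]
  exact iteratedDeriv_fun_mul hf.curry_left.contDiffAt hg.curry_left.contDiffAt

theorem pd_zero_j_fun_mul (j : ℕ) (hf : AnalyticAt ℂ f 0) (hg : AnalyticAt ℂ g 0) :
    pd 0 j (fun p => f p * g p) =
      ∑ k ∈ range (j + 1), j.choose k * pd 0 k f * pd 0 (j - k) g := by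
  simp only [pd, iteratedDeriv_zero]
  exact iteratedDeriv_fun_mul hf.curry_right.contDiffAt hg.curry_right.contDiffAt

theorem pd_i_one_fun_mul (i : ℕ) (hf : AnalyticAt ℂ f 0) (hg : AnalyticAt ℂ g 0) :
    pd i 1 (fun p => f p * g p) =
      ∑ k ∈ range (i + 1),
        i.choose k * (pd k 1 f * pd (i - k) 0 g + pd k 0 f * pd (i - k) 1 g) := by
  have hprod : (fun x => deriv (fun y => f (x, y) * g (x, y)) 0) =ᶠ[𝓝 0]
      fun x => deriv (fun y => f (x, y)) 0 * g (x, 0)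
        + f (x, 0) * deriv (fun y => g (x, y)) 0 := by
    filter_upwards [hf.eventually_analyticAt_along_fst, hg.eventually_analyticAt_along_fst]
      with x hfx hgx
    exact deriv_mul hfx.curry_right.differentiableAt hgx.curry_right.differentiableAt
  have hfx : AnalyticAt ℂ (fun x => f (x, 0)) 0 := hf.curry_left
  have hgx : AnalyticAt ℂ (fun x => g (x, 0)) 0 := hg.curry_left
  have hfy : AnalyticAt ℂ (fun x => deriv (fun y => f (x, y)) 0) 0 := hf.deriv_along_snd
  have hgy : AnalyticAt ℂ (fun x => deriv (fun y => g (x, y)) 0) 0 := hg.deriv_along_snd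
  simp only [pd, iteratedDeriv_zero, iteratedDeriv_one]
  rw [hprod.iteratedDeriv_eq, iteratedDeriv_fun_add (hfy.fun_mul hgx).contDiffAt
      (hfx.fun_mul hgy).contDiffAt, iteratedDeriv_fun_mul hfy.contDiffAt hgx.contDiffAt,
    iteratedDeriv_fun_mul hfx.contDiffAt hgy.contDiffAt, ← sum_add_distrib]
  refine sum_congr rfl fun k _ => ?_
  ring

end Leibniz

theorem A4_eq_mul_of_pd_eq_mul {f g : ℂ × ℂ → ℂ} (c : ℂ) (h40 : pd 4 0 g = c * pd 4 0 f)
    (h21 : pd 2 1 g = c * pd 2 1 f) (h02 : pd 0 2 g = c * pd 0 2 f) : A4 g = c * A4 f := by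
  rcases eq_or_ne c 0 with rfl | hc
  · simp [A4, h40, h21, h02]
  · rw [A4, A4, h40, h21, h02, mul_pow, ← mul_div_mul_left (3 * pd 2 1 f ^ 2) (pd 0 2 f) hc]
    ring

theorem stmt_5_general (U : Set (ℂ × ℂ)) (h0U : (0 : ℂ × ℂ) ∈ U)
    (ρ τ : ℂ × ℂ → ℂ) (hρ : AnalyticOnNhd ℂ ρ U) (hτ : AnalyticOnNhd ℂ τ U)
    (h00 : pd 0 0 ρ = 0) (h10 : pd 1 0 ρ = 0) (h01 : pd 0 1 ρ = 0)
    (h20 : pd 2 0 ρ = 0) (h11 : pd 1 1 ρ = 0)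
    (hA3 : pd 3 0 ρ = 0) (hτ0 : τ 0 ≠ 0) :
    A4 (fun p => τ p * ρ p) = τ 0 * A4 ρ ∧
      (A4 (fun p => τ p * ρ p) = 0 ↔ A4 ρ = 0) := by
  have hτa := hτ 0 h0U
  have hρa := hρ 0 h0U
  have hA4 : A4 (fun p => τ p * ρ p) = τ 0 * A4 ρ := by
    apply A4_eq_mul_of_pd_eq_mul
    · simp [pd_i_zero_fun_mul 4 hτa hρa, sum_range_succ, h00, h10, h20, hA3, pd_zero_zero]
    · simp [pd_i_one_fun_mul 2 hτa hρa, sum_range_succ, h00, h10, h20, h01, h11, pd_zero_zero]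
    · simp [pd_zero_j_fun_mul 2 hτa hρa, sum_range_succ, h00, h01, pd_zero_zero]
  exact ⟨hA4, by rw [hA4, mul_eq_zero, or_iff_right hτ0]⟩

theorem stmt_5 (U : Set (ℂ × ℂ)) (hU : IsOpen U) (h0U : (0 : ℂ × ℂ) ∈ U)
    (ρ τ : ℂ × ℂ → ℂ) (hρ : AnalyticOnNhd ℂ ρ U) (hτ : AnalyticOnNhd ℂ τ U)
    (h00 : pd 0 0 ρ = 0) (h10 : pd 1 0 ρ = 0) (h01 : pd 0 1 ρ = 0)
    (h20 : pd 2 0 ρ = 0) (h11 : pd 1 1 ρ = 0) (h02 : pd 0 2 ρ ≠ 0)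
    (hA3 : pd 3 0 ρ = 0) (hτ0 : τ 0 ≠ 0) :
    A4 (fun p => τ p * ρ p) = τ 0 * A4 ρ ∧
      (A4 (fun p => τ p * ρ p) = 0 ↔ A4 ρ = 0) :=
  stmt_5_general U h0U ρ τ hρ hτ h00 h10 h01 h20 h11 hA3 hτ0
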